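/- arXiv:2102.10776 — 5 statements merged into one kernel-verified Lean document; each statement's English description precedes it below -/
import Mathlib

section
/- If (Q, *) is a binary self-distributive set (shelf), then the ternary operation T(x,y,z) := (x*y)*z is ternary self-distributive. -/
/-! Self-distributivity says that every right translation `· * u` is an endomorphism of the
shelf. Then `T(·, u, v)` is a composite of two endomorphisms, and any endomorphism commutes
with `T`, which is built from `*` alone. -/

section

variable {Q : Type*} (op : Q → Q → Q)

theorem map_op_op_of_map_op {f : Q → Q} (hf : ∀ a b, f (op a b) = op (f a) (f b))
    (x y z : Q) : f (op (op x y) z) = op (op (f x) (f y)) (f z) := by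
  rw [hf, hf]

theorem op_op_right_map_op (hsd : ∀ x y z : Q, op (op x y) z = op (op x z) (op y z))
    (u v a b : Q) : op (op (op a b) u) v = op (op (op a u) v) (op (op b u) v) := by
  rw [hsd a b u, hsd]

end

/-- If `(Q, *)` is a shelf (binary self-distributive set), then
`T(x,y,z) := (x*y)*z` is ternary self-distributive. -/
theorem shelf_double_ternary_self_distributive {Q : Type*}
    (op : Q → Q → Q)
    (hsd : ∀ x y z : Q, op (op x y) z = op (op x z) (op y z))
    (T : Q → Q → Q → Q) (hT : ∀ x y z : Q, T x y z = op (op x y) z) :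
    ∀ x y z u v : Q,
      T (T x y z) u v = T (T x u v) (T y u v) (T z u v) := by
  intro x y z u v
  simp only [hT]
  exact map_op_op_of_map_op op (f := fun w ↦ op (op w u) v)
    (op_op_right_map_op op hsd u v) x y z
end

section
/- Let (X,T) be a TSD set and α : X³ → kˣ a ternary 2-cocycle with values in the units of a field k. On the vector space V with basis X⊗X, the linear map c sending (x⊗y)⊗(z⊗w) to α(x,z,w)·α(y,z,w)·(z⊗w)⊗(T(x,z,w)⊗T(y,z,w)) satisfies the braid equation (c⊗1)∘(1⊗c)∘(c⊗1) = (1⊗c)∘(c⊗1)∘(1⊗c) on V⊗V⊗V. -/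
open Finsupp

/-- The α-twisted braiding on the free vector space with basis `X² × X²`,
acting on the first two of three `X²`-factors. -/
noncomputable def tsdBraidFirst {X : Type*} (k : Type*) [Field k]
    (T : X → X → X → X) (α : X → X → X → kˣ) :
    (((X × X) × (X × X) × (X × X)) →₀ k) →ₗ[k]
      (((X × X) × (X × X) × (X × X)) →₀ k) :=
  Finsupp.lift _ k _ fun b =>
    (((α b.1.1 b.2.1.1 b.2.1.2 : k) * (α b.1.2 b.2.1.1 b.2.1.2 : k)) •
      Finsupp.single
        (b.2.1, (T b.1.1 b.2.1.1 b.2.1.2, T b.1.2 b.2.1.1 b.2.1.2), b.2.2) 1)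

/-- The α-twisted braiding acting on the last two of three `X²`-factors. -/
noncomputable def tsdBraidSecond {X : Type*} (k : Type*) [Field k]
    (T : X → X → X → X) (α : X → X → X → kˣ) :
    (((X × X) × (X × X) × (X × X)) →₀ k) →ₗ[k]
      (((X × X) × (X × X) × (X × X)) →₀ k) :=
  Finsupp.lift _ k _ fun b =>
    (((α b.2.1.1 b.2.2.1 b.2.2.2 : k) * (α b.2.1.2 b.2.2.1 b.2.2.2 : k)) •
      Finsupp.single
        (b.1, b.2.2, (T b.2.1.1 b.2.2.1 b.2.2.2, T b.2.1.2 b.2.2.1 b.2.2.2)) 1)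

/-!
Doubling turns the ternary structure into a binary one `▹` on `X × X`: the pair `(x, y)` is acted on
by `(z, w)` componentwise through `T (·) z w`, with weight `α x z w * α y z w`. Ternary
self-distributivity of `T` makes this binary operation self-distributive, and the ternary cocycle
identity for `α`, applied to both components, makes the weight a binary 2-cocycle. The braid
equation then holds for the cocycle-twisted braiding of any self-distributive operation, because
both sides send a basis vector `a ⊗ b ⊗ c` to a multiple of `c ⊗ (b ▹ c) ⊗ ((a ▹ b) ▹ c)`.
-/

section ShelfBraiding

variable {Y : Type*} (k : Type*) [CommSemiring k] (op : Y → Y → Y) (β : Y → Y → k)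

noncomputable def shelfBraidFirst : ((Y × Y × Y) →₀ k) →ₗ[k] ((Y × Y × Y) →₀ k) :=
  Finsupp.lift _ k _ fun b => β b.1 b.2.1 • Finsupp.single (b.2.1, op b.1 b.2.1, b.2.2) 1

noncomputable def shelfBraidSecond : ((Y × Y × Y) →₀ k) →ₗ[k] ((Y × Y × Y) →₀ k) :=
  Finsupp.lift _ k _ fun b => β b.2.1 b.2.2 • Finsupp.single (b.1, b.2.2, op b.2.1 b.2.2) 1

variable {k op β}

theorem shelfBraidFirst_single (a b c : Y) (r : k) :
    shelfBraidFirst k op β (Finsupp.single (a, b, c) r) =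
      Finsupp.single (b, op a b, c) (r * β a b) := by
  simp [shelfBraidFirst, Finsupp.smul_single]

theorem shelfBraidSecond_single (a b c : Y) (r : k) :
    shelfBraidSecond k op β (Finsupp.single (a, b, c) r) =
      Finsupp.single (a, c, op b c) (r * β b c) := by
  simp [shelfBraidSecond, Finsupp.smul_single]

theorem shelfBraid_braid_equation
    (hop : ∀ a b c, op (op a b) c = op (op a c) (op b c))
    (hβ : ∀ a b c, β a b * β (op a b) c = β a c * β (op a c) (op b c)) :
    shelfBraidFirst k op β ∘ₗ shelfBraidSecond k op β ∘ₗ shelfBraidFirst k op β =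
      shelfBraidSecond k op β ∘ₗ shelfBraidFirst k op β ∘ₗ shelfBraidSecond k op β := by
  refine Finsupp.lhom_ext fun ⟨a, b, c⟩ r => ?_
  simp only [LinearMap.comp_apply, shelfBraidFirst_single, shelfBraidSecond_single, hop a b c]
  congr 1
  calc r * β a b * β (op a b) c * β b c = r * β b c * (β a b * β (op a b) c) := by ring
    _ = r * β b c * β a c * β (op a c) (op b c) := by rw [hβ]; ring

end ShelfBraiding

section TernaryDoubling

variable {X : Type*} (T : X → X → X → X)

def tsdPairOp (p q : X × X) : X × X := (T p.1 q.1 q.2, T p.2 q.1 q.2)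

def tsdPairWeight {k : Type*} [Mul k] (α : X → X → X → k) (p q : X × X) : k :=
  α p.1 q.1 q.2 * α p.2 q.1 q.2

theorem tsdPairOp_self_distrib
    (htsd : ∀ x y z u v : X, T (T x y z) u v = T (T x u v) (T y u v) (T z u v))
    (p q s : X × X) :
    tsdPairOp T (tsdPairOp T p q) s = tsdPairOp T (tsdPairOp T p s) (tsdPairOp T q s) := by
  simp only [tsdPairOp]
  rw [htsd p.1, htsd p.2]

theorem tsdPairWeight_cocycle {k : Type*} [CommMonoid k] (α : X → X → X → k)
    (hα : ∀ x y z u v : X,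
      α x y z * α (T x y z) u v = α x u v * α (T x u v) (T y u v) (T z u v))
    (p q s : X × X) :
    tsdPairWeight α p q * tsdPairWeight α (tsdPairOp T p q) s =
      tsdPairWeight α p s * tsdPairWeight α (tsdPairOp T p s) (tsdPairOp T q s) := by
  simp only [tsdPairWeight, tsdPairOp]
  calc _ = (α p.1 q.1 q.2 * α (T p.1 q.1 q.2) s.1 s.2) *
        (α p.2 q.1 q.2 * α (T p.2 q.1 q.2) s.1 s.2) := by ac_rfl
    _ = _ := by rw [hα p.1, hα p.2]; ac_rfl

theorem tsdBraidFirst_eq_shelfBraidFirst (k : Type*) [Field k] (α : X → X → X → kˣ) :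
    tsdBraidFirst k T α =
      shelfBraidFirst k (tsdPairOp T) (tsdPairWeight fun x y z => (α x y z : k)) :=
  rfl

theorem tsdBraidSecond_eq_shelfBraidSecond (k : Type*) [Field k] (α : X → X → X → kˣ) :
    tsdBraidSecond k T α =
      shelfBraidSecond k (tsdPairOp T) (tsdPairWeight fun x y z => (α x y z : k)) :=
  rfl

end TernaryDoubling

/-- If `(X,T)` is TSD and `α` is a ternary 2-cocycle valued in `kˣ`, then the
α-twisted braiding `c((x⊗y)⊗(z⊗w)) = α(x,z,w)α(y,z,w)·(z⊗w)⊗(T(x,z,w)⊗T(y,z,w))`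
satisfies the braid equation `(c⊗1)(1⊗c)(c⊗1) = (1⊗c)(c⊗1)(1⊗c)`. -/
theorem tsd_cocycle_braiding_satisfies_braid_equation
    {X : Type*} (k : Type*) [Field k]
    (T : X → X → X → X)
    (htsd : ∀ x y z u v : X,
      T (T x y z) u v = T (T x u v) (T y u v) (T z u v))
    (α : X → X → X → kˣ)
    (hα : ∀ x y z u v : X,
      α x y z * α (T x y z) u v =
        α x u v * α (T x u v) (T y u v) (T z u v)) :
    (tsdBraidFirst k T α) ∘ₗ (tsdBraidSecond k T α) ∘ₗ (tsdBraidFirst k T α) =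
      (tsdBraidSecond k T α) ∘ₗ (tsdBraidFirst k T α) ∘ₗ
        (tsdBraidSecond k T α) := by
  have hα_val : ∀ x y z u v : X, (α x y z : k) * α (T x y z) u v =
      α x u v * α (T x u v) (T y u v) (T z u v) := by
    exact_mod_cast hα
  rw [tsdBraidFirst_eq_shelfBraidFirst, tsdBraidSecond_eq_shelfBraidSecond]
  exact shelfBraid_braid_equation (tsdPairOp_self_distrib T htsd)
    (tsdPairWeight_cocycle T _ hα_val)
end

section
/- On the set-theoretic level: if (X,T) is a TSD set, the map R : X² × X² → X² × X² given by R((x,y),(z,w)) = ((z,w),(T(x,z,w),T(y,z,w))) is a set-theoretic solution of the Yang-Baxter equation, i.e. (R×id)(id×R)(R×id) = (id×R)(R×id)(id×R) on (X²)³. -/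
/-!
A ternary operation `T` induces the binary operation `(x, y) ◃ (z, w) = (T x z w, T y z w)`
on `X × X`, and the ternary self-distributive law for `T` is exactly right self-distributivity
of `◃`. For any right self-distributive operation `◃` on a set `Y`, the map
`(a, b) ↦ (b, a ◃ b)` sends `(a, b, c)` to `(c, b ◃ c, (a ◃ b) ◃ c)` under `R₁ R₂ R₁` and to
`(c, b ◃ c, (a ◃ c) ◃ (b ◃ c))` under `R₂ R₁ R₂`, so the braid relation is that law.
-/

theorem yangBaxter_of_rightSelfDistrib {Y : Type*} (op : Y → Y → Y)
    (hop : ∀ a b c : Y, op (op a b) c = op (op a c) (op b c))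
    (R : Y × Y → Y × Y) (hR : ∀ a b : Y, R (a, b) = (b, op a b))
    (R₁ R₂ : Y × Y × Y → Y × Y × Y)
    (hR₁ : ∀ a b c : Y, R₁ (a, b, c) = ((R (a, b)).1, (R (a, b)).2, c))
    (hR₂ : ∀ a b c : Y, R₂ (a, b, c) = (a, (R (b, c)).1, (R (b, c)).2)) :
    R₁ ∘ R₂ ∘ R₁ = R₂ ∘ R₁ ∘ R₂ := by
  funext ⟨a, b, c⟩
  simp only [Function.comp_apply, hR₁, hR₂, hR, hop a b c]

def pairOp {X : Type*} (T : X → X → X → X) (p q : X × X) : X × X :=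
  (T p.1 q.1 q.2, T p.2 q.1 q.2)

theorem pairOp_rightSelfDistrib {X : Type*} (T : X → X → X → X)
    (htsd : ∀ x y z u v : X, T (T x y z) u v = T (T x u v) (T y u v) (T z u v))
    (p q r : X × X) :
    pairOp T (pairOp T p q) r = pairOp T (pairOp T p r) (pairOp T q r) := by
  simp only [pairOp]
  rw [htsd p.1, htsd p.2]

/-- If `(X,T)` is TSD, the map `R((x,y),(z,w)) = ((z,w),(T x z w, T y z w))`
is a set-theoretic solution of the Yang–Baxter equation. -/
theorem tsd_set_theoretic_yang_baxter {X : Type*} (T : X → X → X → X)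
    (htsd : ∀ x y z u v : X,
      T (T x y z) u v = T (T x u v) (T y u v) (T z u v))
    (R : (X × X) × (X × X) → (X × X) × (X × X))
    (hR : ∀ p q : X × X,
      R (p, q) = (q, (T p.1 q.1 q.2, T p.2 q.1 q.2)))
    (R₁ R₂ : (X × X) × (X × X) × (X × X) → (X × X) × (X × X) × (X × X))
    (hR₁ : ∀ p q r : X × X, R₁ (p, q, r) = ((R (p, q)).1, (R (p, q)).2, r))
    (hR₂ : ∀ p q r : X × X, R₂ (p, q, r) = (p, (R (q, r)).1, (R (q, r)).2)) :
    R₁ ∘ R₂ ∘ R₁ = R₂ ∘ R₁ ∘ R₂ :=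
  yangBaxter_of_rightSelfDistrib (pairOp T) (pairOp_rightSelfDistrib T htsd) R hR R₁ R₂ hR₁ hR₂
end

section
/- Let H be an involutory Hopf algebra over a field k (S² = id). The quantum heap T : H⊗H⊗H → H, T(x⊗y⊗z) = x·S(y)·z, satisfies the compatibility with comultiplication needed for categorical TSD: in Sweedler notation, T(T(x⊗y⊗z)⊗u⊗v) = T(T(x⊗u^{(1)}⊗v^{(1)}) ⊗ T(y⊗u^{(2)}⊗v^{(2)}) ⊗ T(z⊗u^{(3)}⊗v^{(3)})) for all x,y,z,u,v in H, assuming H is cocommutative. -/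
open Coalgebra TensorProduct

/-- The quantum heap operation `T(x,y,z) = x·S(y)·z` of a Hopf algebra. -/
noncomputable def quantumHeap (k : Type*) [Field k] (H : Type*) [Ring H]
    [HopfAlgebra k H] (x y z : H) : H :=
  x * HopfAlgebra.antipode (R := k) y * z

/-!
Write `S` for the antipode. Since `S` is an anti-homomorphism with `S² = id`, each summand of the
right-hand side is `x S(u⁽¹⁾) · v⁽¹⁾ S(v⁽²⁾) · u⁽²⁾ S(y) z S(u⁽³⁾) · v⁽³⁾`. Summing over the
coproduct of `v`, the antipode axiom `v⁽¹⁾ S(v⁽²⁾) ⊗ v⁽³⁾ = 1 ⊗ v` collapses this to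
`x · S(u⁽¹⁾) u⁽²⁾ · S(y) z · S(u⁽³⁾) v`, and then `S(u⁽¹⁾) u⁽²⁾ ⊗ u⁽³⁾ = 1 ⊗ u` leaves
`x S(y) z S(u) v`.
-/

namespace Bialgebra

variable {R A ι : Type*} [CommSemiring R] [Semiring A] [Bialgebra R A]
  {w : A} {s : Finset ι} {w₁ w₂ w₃ : ι → A}

lemma sum_tmul_eq_one_tmul_of_comp_comul (f : A ⊗[R] A →ₗ[R] A)
    (hf : f ∘ₗ comul = Algebra.linearMap R A ∘ₗ counit)
    (hw : map (comul (R := R)) LinearMap.id (comul w) = ∑ i ∈ s, (w₁ i ⊗ₜ w₂ i) ⊗ₜ w₃ i) :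
    ∑ i ∈ s, f (w₁ i ⊗ₜ w₂ i) ⊗ₜ[R] w₃ i = 1 ⊗ₜ w := by
  have key : (f.rTensor A) ((comul (R := R)).rTensor A (comul w)) = 1 ⊗ₜ w := by
    rw [← LinearMap.comp_apply, ← LinearMap.rTensor_comp, hf, LinearMap.rTensor_comp,
      LinearMap.comp_apply, rTensor_counit_comul]
    simp
  rw [← LinearMap.rTensor_def] at hw
  simpa [hw, map_sum] using key

end Bialgebra

namespace HopfAlgebra

variable {R A M ι : Type*} [CommSemiring R] [Semiring A] [HopfAlgebra R A]
  [AddCommMonoid M] [Module R M] {w : A} {s : Finset ι} {w₁ w₂ w₃ : ι → A}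

lemma sum_mul_antipode_tmul_eq_one_tmul
    (hw : map (comul (R := R)) LinearMap.id (comul w) = ∑ i ∈ s, (w₁ i ⊗ₜ w₂ i) ⊗ₜ w₃ i) :
    ∑ i ∈ s, (w₁ i * antipode R (w₂ i)) ⊗ₜ[R] w₃ i = 1 ⊗ₜ w := by
  simpa using Bialgebra.sum_tmul_eq_one_tmul_of_comp_comul
    (LinearMap.mul' R A ∘ₗ (antipode R).lTensor A)
    (by rw [LinearMap.comp_assoc]; exact mul_antipode_lTensor_comul) hw

lemma sum_antipode_mul_tmul_eq_one_tmul
    (hw : map (comul (R := R)) LinearMap.id (comul w) = ∑ i ∈ s, (w₁ i ⊗ₜ w₂ i) ⊗ₜ w₃ i) :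
    ∑ i ∈ s, (antipode R (w₁ i) * w₂ i) ⊗ₜ[R] w₃ i = 1 ⊗ₜ w := by
  simpa using Bialgebra.sum_tmul_eq_one_tmul_of_comp_comul
    (LinearMap.mul' R A ∘ₗ (antipode R).rTensor A)
    (by rw [LinearMap.comp_assoc]; exact mul_antipode_rTensor_comul) hw

lemma sum_bilin_mul_antipode_eq (β : A →ₗ[R] A →ₗ[R] M)
    (hw : map (comul (R := R)) LinearMap.id (comul w) = ∑ i ∈ s, (w₁ i ⊗ₜ w₂ i) ⊗ₜ w₃ i) :
    ∑ i ∈ s, β (w₁ i * antipode R (w₂ i)) (w₃ i) = β 1 w := by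
  simpa [map_sum] using congr(lift β $(sum_mul_antipode_tmul_eq_one_tmul hw))

lemma sum_bilin_antipode_mul_eq (β : A →ₗ[R] A →ₗ[R] M)
    (hw : map (comul (R := R)) LinearMap.id (comul w) = ∑ i ∈ s, (w₁ i ⊗ₜ w₂ i) ⊗ₜ w₃ i) :
    ∑ i ∈ s, β (antipode R (w₁ i) * w₂ i) (w₃ i) = β 1 w := by
  simpa [map_sum] using congr(lift β $(sum_antipode_mul_tmul_eq_one_tmul hw))

end HopfAlgebra

theorem quantumHeap_categorical_TSD_general
    {k : Type*} [Field k] {H : Type*} [Ring H] [HopfAlgebra k H]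
    (hinv : ∀ a : H,
      HopfAlgebra.antipode (R := k) (HopfAlgebra.antipode (R := k) a) = a)
    (x y z u v : H)
    (s t : Finset ℕ) (u₁ u₂ u₃ v₁ v₂ v₃ : ℕ → H)
    (hu : TensorProduct.map (Coalgebra.comul (R := k)) LinearMap.id
        (Coalgebra.comul (R := k) u) =
      ∑ i ∈ s, (u₁ i ⊗ₜ[k] u₂ i) ⊗ₜ[k] u₃ i)
    (hv : TensorProduct.map (Coalgebra.comul (R := k)) LinearMap.id
        (Coalgebra.comul (R := k) v) =
      ∑ j ∈ t, (v₁ j ⊗ₜ[k] v₂ j) ⊗ₜ[k] v₃ j) :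
    quantumHeap k H (quantumHeap k H x y z) u v =
      ∑ i ∈ s, ∑ j ∈ t,
        quantumHeap k H
          (quantumHeap k H x (u₁ i) (v₁ j))
          (quantumHeap k H y (u₂ i) (v₂ j))
          (quantumHeap k H z (u₃ i) (v₃ j)) := by
  let S := HopfAlgebra.antipode k (A := H)
  have expand : ∀ i j, quantumHeap k H (quantumHeap k H x (u₁ i) (v₁ j))
      (quantumHeap k H y (u₂ i) (v₂ j)) (quantumHeap k H z (u₃ i) (v₃ j)) =
      x * S (u₁ i) * (v₁ j * S (v₂ j)) * (u₂ i * S y * z * S (u₃ i)) * v₃ j := by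
    intro i j
    simp only [quantumHeap, HopfAlgebra.antipode_mul_antidistrib, hinv, mul_assoc, S]
  have sum_v : ∀ i, ∑ j ∈ t,
      x * S (u₁ i) * (v₁ j * S (v₂ j)) * (u₂ i * S y * z * S (u₃ i)) * v₃ j =
      x * (S (u₁ i) * u₂ i) * (S y * z) * S (u₃ i) * v := fun i => by
    simpa [mul_assoc] using HopfAlgebra.sum_bilin_mul_antipode_eq
      ((LinearMap.mul k H).compl₁₂
        (LinearMap.mulLeft k (x * S (u₁ i)) ∘ₗ LinearMap.mulRight k (u₂ i * S y * z * S (u₃ i)))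
        LinearMap.id) hv
  have sum_u : ∑ i ∈ s, x * (S (u₁ i) * u₂ i) * (S y * z) * S (u₃ i) * v =
      x * S y * z * S u * v := by
    simpa [mul_assoc] using HopfAlgebra.sum_bilin_antipode_mul_eq
      ((LinearMap.mul k H).compl₁₂ (LinearMap.mulLeft k x ∘ₗ LinearMap.mulRight k (S y * z))
        (LinearMap.mulRight k v ∘ₗ S)) hu
  calc quantumHeap k H (quantumHeap k H x y z) u v = x * S y * z * S u * v := rfl
    _ = ∑ i ∈ s, x * (S (u₁ i) * u₂ i) * (S y * z) * S (u₃ i) * v := sum_u.symm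
    _ = _ := by simp only [← sum_v, expand]

/-- For a cocommutative involutory Hopf algebra `H`, the quantum heap
satisfies the categorical ternary self-distributivity condition: in Sweedler
notation, `T(T(x,y,z),u,v) =
  T(T(x,u⁽¹⁾,v⁽¹⁾), T(y,u⁽²⁾,v⁽²⁾), T(z,u⁽³⁾,v⁽³⁾))`. -/
theorem quantumHeap_categorical_TSD
    {k : Type*} [Field k] {H : Type*} [Ring H] [HopfAlgebra k H]
    (hcocomm : ∀ a : H,
      (TensorProduct.comm k H H) (Coalgebra.comul (R := k) a) =
        Coalgebra.comul (R := k) a)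
    (hinv : ∀ a : H,
      HopfAlgebra.antipode (R := k) (HopfAlgebra.antipode (R := k) a) = a)
    (x y z u v : H)
    (s t : Finset ℕ) (u₁ u₂ u₃ v₁ v₂ v₃ : ℕ → H)
    (hu : TensorProduct.map (Coalgebra.comul (R := k)) LinearMap.id
        (Coalgebra.comul (R := k) u) =
      ∑ i ∈ s, (u₁ i ⊗ₜ[k] u₂ i) ⊗ₜ[k] u₃ i)
    (hv : TensorProduct.map (Coalgebra.comul (R := k)) LinearMap.id
        (Coalgebra.comul (R := k) v) =
      ∑ j ∈ t, (v₁ j ⊗ₜ[k] v₂ j) ⊗ₜ[k] v₃ j) :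
    quantumHeap k H (quantumHeap k H x y z) u v =
      ∑ i ∈ s, ∑ j ∈ t,
        quantumHeap k H
          (quantumHeap k H x (u₁ i) (v₁ j))
          (quantumHeap k H y (u₂ i) (v₂ j))
          (quantumHeap k H z (u₃ i) (v₃ j)) :=
  quantumHeap_categorical_TSD_general hinv x y z u v s t u₁ u₂ u₃ v₁ v₂ v₃ hu hv
end

section
/- Let X₁,…,Xₙ be coalgebras over k, H a Hopf algebra acting on each Xᵢ (with Xᵢ an H-module coalgebra), and pᵢ : Xᵢ⊗Xᵢ → H coalgebra morphisms satisfying pᵢ(z·Δ(h)) = S(h^{(1)})·pᵢ(z)·h^{(2)} for all z ∈ Xᵢ⊗Xᵢ, h ∈ H. Then the maps T_{ij} : Xᵢ⊗Xⱼ⊗Xⱼ → Xᵢ, T_{ij}(x⊗y₁⊗y₂) = x·pⱼ(y₁⊗y₂), form a compatible system: T_{ik}(T_{ij}(x⊗y₁⊗y₂)⊗z₁⊗z₂) = T_{ij}(T_{ik}(x⊗z₁^{(1)}⊗z₂^{(1)}) ⊗ T_{jk}(y₁⊗z₁^{(2)}⊗z₂^{(2)}) ⊗ T_{jk}(y₂⊗z₁^{(3)}⊗z₂^{(3)})).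 -/
/-!
Since `pₗ` is a coalgebra morphism, the iterated coproduct of `g = pₗ(z₁ ⊗ z₂)` is
`∑ pₗ(z₁⁽¹⁾ ⊗ z₂⁽¹⁾) ⊗ pₗ(z₁⁽²⁾ ⊗ z₂⁽²⁾) ⊗ pₗ(z₁⁽³⁾ ⊗ z₂⁽³⁾)`, so the right-hand side is
`x · ∑ g⁽¹⁾ pⱼ(y₁ g⁽²⁾ ⊗ y₂ g⁽³⁾)`. Equivariance of `pⱼ` rewrites `pⱼ(y₁ g⁽²⁾ ⊗ y₂ g⁽³⁾)` as
`S(g⁽²⁾) q g⁽³⁾` with `q = pⱼ(y₁ ⊗ y₂)`, and the antipode axiom collapses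
`∑ g⁽¹⁾ S(g⁽²⁾) q g⁽³⁾` to `q g`, which is the left-hand side.
-/

open Coalgebra TensorProduct LinearMap

theorem TensorProduct.exists_finset_nat_sum_tmul {R M N : Type*} [CommSemiring R]
    [AddCommMonoid M] [Module R M] [AddCommMonoid N] [Module R N] (x : M ⊗[R] N) :
    ∃ (s : Finset ℕ) (f : ℕ → M) (g : ℕ → N), x = ∑ n ∈ s, f n ⊗ₜ[R] g n := by
  obtain ⟨S, rfl⟩ := exists_finset x
  let v : ℕ → M × N := fun n ↦ if h : n < S.card then S.equivFin.symm ⟨n, h⟩ else 0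
  refine ⟨Finset.range S.card, fun n ↦ (v n).1, fun n ↦ (v n).2, ?_⟩
  rw [Finset.sum_range, ← S.sum_coe_sort, ← S.equivFin.symm.sum_comp]
  simp [v]

section Coalgebra

variable {k A B C : Type*} [CommSemiring k]
  [AddCommMonoid A] [Module k A] [AddCommMonoid B] [Module k B] [AddCommMonoid C] [Module k C]

theorem TensorProduct.map_comul_id_comul_tmul [CoalgebraStruct k A] [CoalgebraStruct k B]
    (a : A) (b : B) :
    map comul id (comul (R := k) (a ⊗ₜ[k] b)) =
      map (tensorTensorTensorComm k A A B B) id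
        (tensorTensorTensorComm k (A ⊗[k] A) A (B ⊗[k] B) B
          (map comul id (comul a) ⊗ₜ map comul id (comul b))) := by
  rw [comul_tmul, AlgebraTensorModule.tensorTensorTensorComm_eq]
  induction comul (R := k) a using TensorProduct.induction_on with
  | zero => simp
  | tmul a₁ a₂ =>
    induction comul (R := k) b using TensorProduct.induction_on with
    | zero => simp
    | tmul b₁ b₂ => simp [AlgebraTensorModule.tensorTensorTensorComm_eq]
    | add v v' hv hv' => simp_all [tmul_add]
  | add u u' hu hu' => simp_all [add_tmul]

theorem comul_comp_eq_map_comp_comul_of_sum_tmul [CoalgebraStruct k A] [CoalgebraStruct k B]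
    [CoalgebraStruct k C] (P : A ⊗[k] B →ₗ[k] C)
    (hP : ∀ (a : A) (b : B) (s t : Finset ℕ) (a₁ a₂ : ℕ → A) (b₁ b₂ : ℕ → B),
      comul (R := k) a = ∑ m ∈ s, a₁ m ⊗ₜ[k] a₂ m →
      comul (R := k) b = ∑ n ∈ t, b₁ n ⊗ₜ[k] b₂ n →
      comul (R := k) (P (a ⊗ₜ[k] b)) =
        ∑ m ∈ s, ∑ n ∈ t, P (a₁ m ⊗ₜ[k] b₁ n) ⊗ₜ[k] P (a₂ m ⊗ₜ[k] b₂ n)) :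
    comul ∘ₗ P = map P P ∘ₗ comul := by
  refine TensorProduct.ext' fun a b ↦ ?_
  obtain ⟨s, a₁, a₂, ha⟩ := exists_finset_nat_sum_tmul (comul (R := k) a)
  obtain ⟨t, b₁, b₂, hb⟩ := exists_finset_nat_sum_tmul (comul (R := k) b)
  simp only [coe_comp, Function.comp_apply, hP a b s t a₁ a₂ b₁ b₂ ha hb, comul_tmul, ha, hb,
    tmul_sum, sum_tmul, map_sum, AlgebraTensorModule.tensorTensorTensorComm_tmul,
    TensorProduct.map_tmul]
  exact Finset.sum_comm

theorem map_comul_id_comul_apply_of_comul_comp [CoalgebraStruct k A] [CoalgebraStruct k C]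
    {P : A →ₗ[k] C} (hP : comul ∘ₗ P = map P P ∘ₗ comul) (a : A) :
    map comul id (comul (R := k) (P a)) = map (map P P) P (map comul id (comul (R := k) a)) := by
  rw [← comp_apply comul P, hP, comp_apply, map_map, map_map, hP, id_comp, comp_id]

end Coalgebra

namespace HopfAlgebra

variable (k : Type*) {H : Type*} [CommSemiring k] [Semiring H] [HopfAlgebra k H]

/-- `rightAdjointAction k q h = S(h⁽¹⁾) q h⁽²⁾`. -/
noncomputable def rightAdjointAction (q : H) : H →ₗ[k] H :=
  mul' k H ∘ₗ map (mulRight k q ∘ₗ antipode k) id ∘ₗ comul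

variable {k}

theorem mul'_map_id_rightAdjointAction_comul (q h : H) :
    mul' k H (map id (rightAdjointAction k q) (comul (R := k) h)) = q * h := by
  calc mul' k H (map id (rightAdjointAction k q) (comul (R := k) h))
      = mul' k H (map id (mul' k H ∘ₗ map (mulRight k q ∘ₗ antipode k) id)
          (TensorProduct.assoc k H H H (rTensor H comul (comul (R := k) h)))) := by
        rw [coassoc_apply, rightAdjointAction, lTensor_def, map_map]
        rfl
    _ = mul' k H (map (mulRight k q ∘ₗ mul' k H ∘ₗ lTensor H (antipode k)) id
          (rTensor H comul (comul (R := k) h))) := by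
        induction rTensor H comul (comul (R := k) h) using TensorProduct.induction_on with
        | zero => simp
        | tmul w c =>
          induction w using TensorProduct.induction_on with
          | zero => simp
          | tmul a b => simp [mul_assoc]
          | add w w' hw hw' => simp_all [add_tmul]
        | add w w' hw hw' => simp_all
    _ = mul' k H (map (mulRight k q ∘ₗ Algebra.linearMap k H) id
          (rTensor H counit (comul (R := k) h))) := by
        rw [rTensor_def, rTensor_def, map_map, map_map, comp_assoc, comp_assoc,
          mul_antipode_lTensor_comul]
        rfl
    _ = q * h := by simp

theorem apply_map_comul_eq_rightAdjointAction {A B : Type*} [AddCommMonoid A] [Module k A]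
    [AddCommMonoid B] [Module k B] (P : A ⊗[k] B →ₗ[k] H) (f : H →ₗ[k] A) (g : H →ₗ[k] B)
    (q : H)
    (hP : ∀ (h : H) (s : Finset ℕ) (h₁ h₂ : ℕ → H),
      comul (R := k) h = ∑ n ∈ s, h₁ n ⊗ₜ[k] h₂ n →
      P (∑ n ∈ s, f (h₁ n) ⊗ₜ[k] g (h₂ n)) = ∑ n ∈ s, antipode k (h₁ n) * q * h₂ n)
    (h : H) : P (map f g (comul (R := k) h)) = rightAdjointAction k q h := by
  obtain ⟨s, h₁, h₂, hh⟩ := exists_finset_nat_sum_tmul (comul (R := k) h)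
  simp [rightAdjointAction, hh, map_sum, hP h s h₁ h₂ hh]

end HopfAlgebra

theorem augmented_racks_give_compatible_system_general
    {k : Type*} [Field k] {H : Type*} [Ring H] [HopfAlgebra k H]
    {ι : Type*} (X : ι → Type*)
    [∀ i, AddCommGroup (X i)] [∀ i, Module k (X i)] [∀ i, Coalgebra k (X i)]
    -- a right `H`-module structure on each `Xᵢ`
    (act : ∀ i, X i →ₗ[k] H →ₗ[k] X i)
    (hact_mul : ∀ (i) (x : X i) (h h' : H),
      act i (act i x h) h' = act i x (h * h'))
    (p : ∀ i, (X i ⊗[k] X i) →ₗ[k] H)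
    -- each `pᵢ` is a coalgebra morphism
    (hp_comul : ∀ (i) (y₁ y₂ : X i) (s t : Finset ℕ)
      (a₁ a₂ b₁ b₂ : ℕ → X i),
      Coalgebra.comul (R := k) y₁ = ∑ a ∈ s, a₁ a ⊗ₜ[k] a₂ a →
      Coalgebra.comul (R := k) y₂ = ∑ b ∈ t, b₁ b ⊗ₜ[k] b₂ b →
      Coalgebra.comul (R := k) (p i (y₁ ⊗ₜ[k] y₂)) =
        ∑ a ∈ s, ∑ b ∈ t,
          p i (a₁ a ⊗ₜ[k] b₁ b) ⊗ₜ[k] p i (a₂ a ⊗ₜ[k] b₂ b))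
    -- the augmented-rack (equivariance) condition
    (hp_equiv : ∀ (i) (h : H) (y₁ y₂ : X i) (s : Finset ℕ) (h₁ h₂ : ℕ → H),
      Coalgebra.comul (R := k) h = ∑ n ∈ s, h₁ n ⊗ₜ[k] h₂ n →
      p i (∑ n ∈ s, act i y₁ (h₁ n) ⊗ₜ[k] act i y₂ (h₂ n)) =
        ∑ n ∈ s,
          HopfAlgebra.antipode (R := k) (h₁ n) * p i (y₁ ⊗ₜ[k] y₂) * h₂ n) :
    -- conclusion: the maps `T_{ij}(x⊗y₁⊗y₂) = x·pⱼ(y₁⊗y₂)` are compatible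
    ∀ (i j l : ι) (x : X i) (y₁ y₂ : X j) (z₁ z₂ : X l)
      (s t : Finset ℕ) (z₁₁ z₁₂ z₁₃ z₂₁ z₂₂ z₂₃ : ℕ → X l),
      TensorProduct.map (Coalgebra.comul (R := k)) LinearMap.id
          (Coalgebra.comul (R := k) z₁) =
        ∑ m ∈ s, (z₁₁ m ⊗ₜ[k] z₁₂ m) ⊗ₜ[k] z₁₃ m →
      TensorProduct.map (Coalgebra.comul (R := k)) LinearMap.id
          (Coalgebra.comul (R := k) z₂) =
        ∑ n ∈ t, (z₂₁ n ⊗ₜ[k] z₂₂ n) ⊗ₜ[k] z₂₃ n →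
      act i (act i x (p j (y₁ ⊗ₜ[k] y₂))) (p l (z₁ ⊗ₜ[k] z₂)) =
        ∑ m ∈ s, ∑ n ∈ t,
          act i (act i x (p l (z₁₁ m ⊗ₜ[k] z₂₁ n)))
            (p j (act j y₁ (p l (z₁₂ m ⊗ₜ[k] z₂₂ n)) ⊗ₜ[k]
              act j y₂ (p l (z₁₃ m ⊗ₜ[k] z₂₃ n)))) := by
  intro i j l x y₁ y₂ z₁ z₂ s t z₁₁ z₁₂ z₁₃ z₂₁ z₂₂ z₂₃ hz₁ hz₂
  set q := p j (y₁ ⊗ₜ[k] y₂)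
  set g := p l (z₁ ⊗ₜ[k] z₂)
  have hg_comul : map comul id (comul (R := k) g) = ∑ m ∈ s, ∑ n ∈ t,
      (p l (z₁₁ m ⊗ₜ z₂₁ n) ⊗ₜ[k] p l (z₁₂ m ⊗ₜ z₂₂ n)) ⊗ₜ[k] p l (z₁₃ m ⊗ₜ z₂₃ n) := by
    rw [map_comul_id_comul_apply_of_comul_comp
      (comul_comp_eq_map_comp_comul_of_sum_tmul (p l) (hp_comul l)),
      map_comul_id_comul_tmul, hz₁, hz₂]
    simp only [tmul_sum, sum_tmul, map_sum, tensorTensorTensorComm_tmul, TensorProduct.map_tmul,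
      id_coe, id_eq]
    exact Finset.sum_comm
  have hg_antipode : mul' k H (map id (p j ∘ₗ map (act j y₁) (act j y₂))
      (TensorProduct.assoc k H H H (map comul id (comul (R := k) g)))) = q * g := by
    have hp_adjoint :
        p j ∘ₗ map (act j y₁) (act j y₂) ∘ₗ comul = HopfAlgebra.rightAdjointAction k q :=
      LinearMap.ext <| HopfAlgebra.apply_map_comul_eq_rightAdjointAction _ _ _ q
        fun h ↦ hp_equiv j h y₁ y₂
    rw [← HopfAlgebra.mul'_map_id_rightAdjointAction_comul (k := k) q g, ← hp_adjoint,
      ← rTensor_def, coassoc_apply, lTensor_def, map_map]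
    rfl
  calc act i (act i x q) g = act i x (q * g) := hact_mul i x q g
    _ = _ := by rw [← hg_antipode, hg_comul]; simp [map_sum, hact_mul]

/-- Ternary augmented racks: a family of `H`-module coalgebras `Xᵢ` with
coalgebra morphisms `pᵢ : Xᵢ⊗Xᵢ → H` satisfying
`pᵢ(z·Δ(h)) = S(h⁽¹⁾)·pᵢ(z)·h⁽²⁾` gives a compatible system of ternary
self-distributive structures `T_{ij}(x⊗y₁⊗y₂) = x·pⱼ(y₁⊗y₂)`. -/
theorem augmented_racks_give_compatible_system
    {k : Type*} [Field k] {H : Type*} [Ring H] [HopfAlgebra k H]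
    {ι : Type*} (X : ι → Type*)
    [∀ i, AddCommGroup (X i)] [∀ i, Module k (X i)] [∀ i, Coalgebra k (X i)]
    -- a right `H`-module structure on each `Xᵢ`
    (act : ∀ i, X i →ₗ[k] H →ₗ[k] X i)
    (hact_one : ∀ (i) (x : X i), act i x 1 = x)
    (hact_mul : ∀ (i) (x : X i) (h h' : H),
      act i (act i x h) h' = act i x (h * h'))
    -- each `Xᵢ` is an `H`-module coalgebra
    (hmod : ∀ (i) (x : X i) (h : H) (s t : Finset ℕ)
      (x₁ x₂ : ℕ → X i) (h₁ h₂ : ℕ → H),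
      Coalgebra.comul (R := k) x = ∑ a ∈ s, x₁ a ⊗ₜ[k] x₂ a →
      Coalgebra.comul (R := k) h = ∑ b ∈ t, h₁ b ⊗ₜ[k] h₂ b →
      Coalgebra.comul (R := k) (act i x h) =
        ∑ a ∈ s, ∑ b ∈ t, act i (x₁ a) (h₁ b) ⊗ₜ[k] act i (x₂ a) (h₂ b))
    (p : ∀ i, (X i ⊗[k] X i) →ₗ[k] H)
    -- each `pᵢ` is a coalgebra morphism
    (hp_comul : ∀ (i) (y₁ y₂ : X i) (s t : Finset ℕ)
      (a₁ a₂ b₁ b₂ : ℕ → X i),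
      Coalgebra.comul (R := k) y₁ = ∑ a ∈ s, a₁ a ⊗ₜ[k] a₂ a →
      Coalgebra.comul (R := k) y₂ = ∑ b ∈ t, b₁ b ⊗ₜ[k] b₂ b →
      Coalgebra.comul (R := k) (p i (y₁ ⊗ₜ[k] y₂)) =
        ∑ a ∈ s, ∑ b ∈ t,
          p i (a₁ a ⊗ₜ[k] b₁ b) ⊗ₜ[k] p i (a₂ a ⊗ₜ[k] b₂ b))
    (hp_counit : ∀ (i) (y₁ y₂ : X i),
      Coalgebra.counit (R := k) (p i (y₁ ⊗ₜ[k] y₂)) =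
        Coalgebra.counit (R := k) y₁ * Coalgebra.counit (R := k) y₂)
    -- the augmented-rack (equivariance) condition
    (hp_equiv : ∀ (i) (h : H) (y₁ y₂ : X i) (s : Finset ℕ) (h₁ h₂ : ℕ → H),
      Coalgebra.comul (R := k) h = ∑ n ∈ s, h₁ n ⊗ₜ[k] h₂ n →
      p i (∑ n ∈ s, act i y₁ (h₁ n) ⊗ₜ[k] act i y₂ (h₂ n)) =
        ∑ n ∈ s,
          HopfAlgebra.antipode (R := k) (h₁ n) * p i (y₁ ⊗ₜ[k] y₂) * h₂ n) :
    -- conclusion: the maps `T_{ij}(x⊗y₁⊗y₂) = x·pⱼ(y₁⊗y₂)` are compatible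
    ∀ (i j l : ι) (x : X i) (y₁ y₂ : X j) (z₁ z₂ : X l)
      (s t : Finset ℕ) (z₁₁ z₁₂ z₁₃ z₂₁ z₂₂ z₂₃ : ℕ → X l),
      TensorProduct.map (Coalgebra.comul (R := k)) LinearMap.id
          (Coalgebra.comul (R := k) z₁) =
        ∑ m ∈ s, (z₁₁ m ⊗ₜ[k] z₁₂ m) ⊗ₜ[k] z₁₃ m →
      TensorProduct.map (Coalgebra.comul (R := k)) LinearMap.id
          (Coalgebra.comul (R := k) z₂) =
        ∑ n ∈ t, (z₂₁ n ⊗ₜ[k] z₂₂ n) ⊗ₜ[k] z₂₃ n →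
      act i (act i x (p j (y₁ ⊗ₜ[k] y₂))) (p l (z₁ ⊗ₜ[k] z₂)) =
        ∑ m ∈ s, ∑ n ∈ t,
          act i (act i x (p l (z₁₁ m ⊗ₜ[k] z₂₁ n)))
            (p j (act j y₁ (p l (z₁₂ m ⊗ₜ[k] z₂₂ n)) ⊗ₜ[k]
              act j y₂ (p l (z₁₃ m ⊗ₜ[k] z₂₃ n)))) :=
  augmented_racks_give_compatible_system_general X act hact_mul p hp_comul hp_equiv
end
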